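/- In the group N of 4x4 real lower unitriangular matrices, \exp(u X_2) \cdot \exp(n(z,y_1,y_2,x_1,x_2,x_3)) = \exp(n(z', y_1', y_2', x_1, 0, x_3)) \cdot \exp((u + x_2) X_2), where z' = z + (1/6) x_1 x_2 x_3, y_1' = y_1 + x_1 u + (1/2) x_1 x_2, and y_2' = y_2 - x_3 u - (1/2) x_2 x_3. -/

import Mathlib

/-!
Every matrix in the statement is a strictly lower triangular `nmat`. Such matrices are closed
under addition and scaling, and the product of two of them is again an `nmat`, with coordinates
only in the two outermost subdiagonals; hence cubes are multiples of `Z` and fourth powers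
vanish. The exponential series therefore stops after the cubic term and
`exp (nmat …) = 1 + nmat (…)` with polynomial coordinates. Multiplying out
`(1 + nmat p) * (1 + nmat q)` turns both sides of the formula into `1 + nmat (…)`, and the
coordinates agree by polynomial identities.
-/

open Matrix

/-- Elementary 4×4 real matrix. -/
def E (i j : Fin 4) : Matrix (Fin 4) (Fin 4) ℝ := Matrix.single i j 1

/-- `n(z,y₁,y₂,x₁,x₂,x₃) = zZ + y₁Y₁ + y₂Y₂ + x₁X₁ + x₂X₂ + x₃X₃` with
`X₁ = E₂₁, X₂ = E₃₂, X₃ = E₄₃, Y₁ = E₃₁, Y₂ = E₄₂, Z = E₄₁`. -/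
def nmat (z y₁ y₂ x₁ x₂ x₃ : ℝ) : Matrix (Fin 4) (Fin 4) ℝ :=
  x₁ • E 1 0 + x₂ • E 2 1 + x₃ • E 3 2 + y₁ • E 2 0 + y₂ • E 3 1 + z • E 3 0

open Finset in
theorem NormedSpace.exp_eq_sum_range_of_pow_eq_zero {𝕂 𝔸 : Type*} [Field 𝕂] [CharZero 𝕂]
    [Ring 𝔸] [Algebra 𝕂 𝔸] [TopologicalSpace 𝔸] [IsTopologicalRing 𝔸] {a : 𝔸} {k : ℕ}
    (h : a ^ k = 0) :
    NormedSpace.exp a = ∑ i ∈ range k, (i.factorial⁻¹ : 𝕂) • a ^ i := by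
  rw [NormedSpace.exp_eq_tsum 𝕂]
  refine tsum_eq_sum fun i hi => ?_
  rw [pow_eq_zero_of_le (by simpa using hi) h, smul_zero]

theorem nmat_eq_of (z y₁ y₂ x₁ x₂ x₃ : ℝ) :
    nmat z y₁ y₂ x₁ x₂ x₃ = !![0, 0, 0, 0; x₁, 0, 0, 0; y₁, x₂, 0, 0; z, y₂, x₃, 0] := by
  ext i j
  fin_cases i <;> fin_cases j <;> simp [nmat, E]

theorem smul_E_two_one (u : ℝ) : u • E 2 1 = nmat 0 0 0 0 u 0 := by
  simp [nmat]

theorem nmat_add (z y₁ y₂ x₁ x₂ x₃ z' y₁' y₂' x₁' x₂' x₃' : ℝ) :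
    nmat z y₁ y₂ x₁ x₂ x₃ + nmat z' y₁' y₂' x₁' x₂' x₃'
      = nmat (z + z') (y₁ + y₁') (y₂ + y₂') (x₁ + x₁') (x₂ + x₂') (x₃ + x₃') := by
  simp only [nmat, add_smul]
  abel

theorem smul_nmat (c z y₁ y₂ x₁ x₂ x₃ : ℝ) :
    c • nmat z y₁ y₂ x₁ x₂ x₃ = nmat (c * z) (c * y₁) (c * y₂) (c * x₁) (c * x₂) (c * x₃) := by
  simp only [nmat, smul_add, smul_smul]

theorem nmat_mul (z y₁ y₂ x₁ x₂ x₃ z' y₁' y₂' x₁' x₂' x₃' : ℝ) :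
    nmat z y₁ y₂ x₁ x₂ x₃ * nmat z' y₁' y₂' x₁' x₂' x₃'
      = nmat (y₂ * x₁' + x₃ * y₁') (x₂ * x₁') (x₃ * x₂') 0 0 0 := by
  simp only [nmat_eq_of]
  ext i j
  fin_cases i <;> fin_cases j <;> simp [mul_apply, Fin.sum_univ_four]

theorem nmat_pow_four (z y₁ y₂ x₁ x₂ x₃ : ℝ) : nmat z y₁ y₂ x₁ x₂ x₃ ^ 4 = 0 := by
  simp only [pow_succ, pow_zero, one_mul, nmat_mul, zero_mul]
  simp [nmat]

theorem exp_nmat (z y₁ y₂ x₁ x₂ x₃ : ℝ) :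
    NormedSpace.exp (nmat z y₁ y₂ x₁ x₂ x₃)
      = 1 + nmat (z + (y₂ * x₁ + x₃ * y₁) / 2 + x₃ * x₂ * x₁ / 6)
          (y₁ + x₂ * x₁ / 2) (y₂ + x₃ * x₂ / 2) x₁ x₂ x₃ := by
  rw [NormedSpace.exp_eq_sum_range_of_pow_eq_zero (𝕂 := ℝ) (nmat_pow_four z y₁ y₂ x₁ x₂ x₃)]
  simp only [Finset.sum_range_succ, Finset.sum_range_zero, pow_succ, pow_zero, one_mul, nmat_mul,
    smul_nmat, zero_add, add_assoc, nmat_add]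
  congr 2 <;> simp [Nat.factorial] <;> ring

theorem one_add_nmat_mul_one_add_nmat (z y₁ y₂ x₁ x₂ x₃ z' y₁' y₂' x₁' x₂' x₃' : ℝ) :
    (1 + nmat z y₁ y₂ x₁ x₂ x₃) * (1 + nmat z' y₁' y₂' x₁' x₂' x₃')
      = 1 + nmat (z + z' + y₂ * x₁' + x₃ * y₁') (y₁ + y₁' + x₂ * x₁') (y₂ + y₂' + x₃ * x₂')
          (x₁ + x₁') (x₂ + x₂') (x₃ + x₃') := by
  rw [mul_add, add_mul, add_mul, one_mul, mul_one, one_mul, nmat_mul, add_assoc, add_assoc,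
    nmat_add, nmat_add]
  simp only [add_zero, add_assoc]

/-- Multiplication formula in the lower unitriangular group `N`:
`exp(uX₂)·exp(n(z,y₁,y₂,x₁,x₂,x₃)) = exp(n(z',y₁',y₂',x₁,0,x₃))·exp((u+x₂)X₂)` with
`z' = z + x₁x₂x₃/6`, `y₁' = y₁ + x₁u + x₁x₂/2`, `y₂' = y₂ - x₃u - x₂x₃/2`. -/
theorem mult_formula_case_II (u z y₁ y₂ x₁ x₂ x₃ : ℝ) :
    NormedSpace.exp (u • E 2 1) * NormedSpace.exp (nmat z y₁ y₂ x₁ x₂ x₃)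
      = NormedSpace.exp (nmat
            (z + (1/6) * x₁ * x₂ * x₃)
            (y₁ + x₁ * u + (1/2) * x₁ * x₂)
            (y₂ - x₃ * u - (1/2) * x₂ * x₃)
            x₁ 0 x₃) *
        NormedSpace.exp ((u + x₂) • E 2 1) := by
  simp only [smul_E_two_one, exp_nmat, one_add_nmat_mul_one_add_nmat]
  congr 2 <;> ring
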